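/- arXiv:2602.03058 — 2 statements merged into one kernel-verified Lean document; each statement's English description precedes it below -/
import Mathlib

section
/- Let Φ: ℝ → ℝ be continuously differentiable with |Φ(t)| = O(|t|^β) and |Φ'(t)| = O(|t|^β) for some β > 0. Let 𝓔, 𝓔', 𝓔_1, ..., 𝓔_n be i.i.d. standard exponential random variables, let x_1, ..., x_n and u ≠ v be real numbers, and S_x = Σ_{j=1}^n x_j·𝓔_j. Then (E[Φ(S_x + v·𝓔)] − E[Φ(S_x + u·𝓔)])/(v − u) = E[Φ'(S_x + u·𝓔 + v·𝓔')]. -/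
open MeasureTheory ProbabilityTheory Filter Asymptotics

/-!
Since `S_x` is independent of `(𝓔, 𝓔')`, it suffices to prove the identity with `S_x` replaced
by a constant `y` and then integrate in `y` against the law of `S_x`. Integrating by parts against
the density `e^{-t}` gives `w 𝔼 Φ'(c + w 𝓔) = 𝔼 Φ(c + w 𝓔) - Φ(c)`. Applied in `𝓔'` with
`c = y + u 𝓔`, and in `𝓔` with `c = y + v 𝓔'`, it gives
`v I = J - 𝔼 Φ(y + u 𝓔)` and `u I = J - 𝔼 Φ(y + v 𝓔')`, where `I = 𝔼 Φ'(y + u 𝓔 + v 𝓔')` and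
`J = 𝔼 Φ(y + u 𝓔 + v 𝓔')`; subtracting gives the claim. All integrals are finite because
`Φ` and `Φ'` are bounded by a multiple of `(1 + |t|)^β` and exponential variables, hence `S_x`,
have moments of every order.
-/

open Real Set

theorem Continuous.isBigO_top_one_add_abs_rpow {f : ℝ → ℝ} (hf : Continuous f) {β : ℝ}
    (hβ : 0 ≤ β) (hfO : f =O[cocompact ℝ] fun t => |t| ^ β) :
    f =O[⊤] fun t => (1 + |t|) ^ β := by
  set g : ℝ → ℝ := fun t => (1 + |t|) ^ β
  have hg_pos : ∀ t, 0 < g t := fun t => by positivity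
  have hg : Continuous g := (continuous_const.add continuous_abs).rpow_const fun t =>
    Or.inl (by positivity : (0 : ℝ) < 1 + |t|).ne'
  have hfg : f =O[cocompact ℝ] g := hfO.trans <| .of_bound 1 <| .of_forall fun t => by
    simpa [g, abs_of_nonneg (rpow_nonneg (abs_nonneg t) β), abs_of_pos (hg_pos t)] using
      rpow_le_rpow (abs_nonneg t) (by linarith) hβ
  obtain ⟨C, hC⟩ := isBounded_iff_forall_norm_le.1 <|
    (hf.div hg fun t => (hg_pos t).ne').isBounded_range_iff_isBigO.2
      ((isBigO_one_iff ℝ).2 (div_isBoundedUnder_of_isBigO hfg))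
  refine isBigO_top.2 ⟨C, fun t => ?_⟩
  have := hC _ (mem_range_self t)
  rwa [Pi.div_apply, norm_div, div_le_iff₀ (norm_pos_iff.2 (hg_pos t).ne')] at this

theorem MeasureTheory.MemLp.integrable_comp_of_isBigO {α : Type*} [MeasurableSpace α]
    {μ : Measure α} [IsFiniteMeasure μ] {β : ℝ} (hβ : 0 ≤ β) {Z : α → ℝ}
    (hZ : MemLp Z (ENNReal.ofReal β) μ) {f : ℝ → ℝ} (hf : Measurable f)
    (hfO : f =O[⊤] fun t => (1 + |t|) ^ β) :
    Integrable (fun a => f (Z a)) μ := by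
  have hmoment : Integrable (fun a => (1 + |Z a|) ^ β) μ := by
    simpa [ENNReal.toReal_ofReal hβ, abs_of_nonneg (by positivity : (0 : ℝ) ≤ 1 + |Z _|)] using
      ((memLp_const (1 : ℝ)).add hZ.norm).integrable_norm_rpow'
  exact (hfO.comp_tendsto tendsto_top).integrable
    (hf.comp_aemeasurable hZ.aemeasurable).aestronglyMeasurable hmoment

instance : IsProbabilityMeasure (expMeasure 1) := isProbabilityMeasure_expMeasure one_pos

theorem expMeasure_one_eq_withDensity :
    expMeasure 1 = (volume.restrict (Ioi 0)).withDensity fun t => ENNReal.ofReal (exp (-t)) := by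
  rw [Measure.restrict_congr_set Ioi_ae_eq_Ici, ← withDensity_indicator measurableSet_Ici,
    expMeasure, gammaMeasure]
  congr 1 with t
  change exponentialPDF 1 t = _
  rw [exponentialPDF_eq]
  by_cases ht : 0 ≤ t <;> simp [ht]

theorem integral_expMeasure_one (f : ℝ → ℝ) :
    ∫ t, f t ∂(expMeasure 1) = ∫ t in Ioi 0, exp (-t) * f t := by
  rw [expMeasure_one_eq_withDensity, integral_withDensity_eq_integral_toReal_smul (by fun_prop)
    (ae_of_all _ fun _ => ENNReal.ofReal_lt_top)]
  simp [ENNReal.toReal_ofReal (exp_pos _).le]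

theorem integrable_expMeasure_one_iff {f : ℝ → ℝ} :
    Integrable f (expMeasure 1) ↔ IntegrableOn (fun t => exp (-t) * f t) (Ioi 0) := by
  rw [expMeasure_one_eq_withDensity, integrable_withDensity_iff_integrable_smul' (by fun_prop)
    (ae_of_all _ fun _ => ENNReal.ofReal_lt_top)]
  simp [ENNReal.toReal_ofReal (exp_pos _).le, IntegrableOn]

theorem memLp_id_expMeasure_one {p : ENNReal} (hp : p ≠ ⊤) : MemLp id p (expMeasure 1) := by
  rcases eq_or_ne p 0 with rfl | hp0
  · exact memLp_zero_iff_aestronglyMeasurable.2 aestronglyMeasurable_id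
  rw [← integrable_norm_rpow_iff aestronglyMeasurable_id hp0 hp, integrable_expMeasure_one_iff]
  refine (GammaIntegral_convergent (s := p.toReal + 1) (by positivity)).congr_fun
    (fun t (ht : 0 < t) => ?_) measurableSet_Ioi
  simp [abs_of_pos ht]

theorem memLp_of_map_eq_expMeasure_one {Ω : Type*} [MeasurableSpace Ω] {μ : Measure Ω}
    {X : Ω → ℝ} (hX : AEMeasurable X μ) (hlaw : μ.map X = expMeasure 1) {p : ENNReal}
    (hp : p ≠ ⊤) : MemLp X p μ :=
  (memLp_map_measure_iff aestronglyMeasurable_id hX).1 (hlaw ▸ memLp_id_expMeasure_one hp)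

theorem mul_integral_deriv_comp_expMeasure_one {Φ : ℝ → ℝ} (hΦ : Differentiable ℝ Φ) (c w : ℝ)
    (hint : Integrable (fun t => Φ (c + w * t)) (expMeasure 1))
    (hint' : Integrable (fun t => deriv Φ (c + w * t)) (expMeasure 1)) :
    w * ∫ t, deriv Φ (c + w * t) ∂(expMeasure 1)
      = ∫ t, Φ (c + w * t) ∂(expMeasure 1) - Φ c := by
  have hderiv : ∀ t, HasDerivAt (fun t => exp (-t) * Φ (c + w * t))
      (exp (-t) * (w * deriv Φ (c + w * t) - Φ (c + w * t))) t := fun t => by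
    have hinner : HasDerivAt (fun t => c + w * t) w t := by
      simpa using ((hasDerivAt_id t).const_mul w).const_add c
    exact ((hasDerivAt_neg t).exp.mul ((hΦ _).hasDerivAt.comp t hinner)).congr_deriv
      (by simp only [Function.comp_apply]; ring)
  have hint_deriv := integrable_expMeasure_one_iff.1 ((hint'.const_mul w).sub hint)
  have hFTC := integral_Ioi_of_hasDerivAt_of_tendsto' (fun t _ => hderiv t) hint_deriv
    (tendsto_zero_of_hasDerivAt_of_integrableOn_Ioi (fun t _ => hderiv t) hint_deriv
      (integrable_expMeasure_one_iff.1 hint))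
  rw [← integral_expMeasure_one, integral_sub (hint'.const_mul w) hint, integral_const_mul]
    at hFTC
  simp only [neg_zero, exp_zero, mul_zero, add_zero, one_mul, zero_sub] at hFTC
  linarith

section GrowthIntegrability

variable {β : ℝ} {f : ℝ → ℝ}

theorem integrable_comp_add_mul_expMeasure_one (hβ : 0 ≤ β) (hf : Measurable f)
    (hfO : f =O[⊤] fun t => (1 + |t|) ^ β) (c w : ℝ) :
    Integrable (fun t => f (c + w * t)) (expMeasure 1) :=
  ((memLp_const c).add ((memLp_id_expMeasure_one ENNReal.ofReal_ne_top).const_mul w))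
    |>.integrable_comp_of_isBigO hβ hf hfO

theorem integrable_comp_add_mul_add_mul_expMeasure_one_prod (hβ : 0 ≤ β) (hf : Measurable f)
    (hfO : f =O[⊤] fun t => (1 + |t|) ^ β) (c u v : ℝ) :
    Integrable (fun q : ℝ × ℝ => f (c + u * q.1 + v * q.2))
      ((expMeasure 1).prod (expMeasure 1)) := by
  have hX := memLp_id_expMeasure_one (p := ENNReal.ofReal β) ENNReal.ofReal_ne_top
  have hX₁ := hX.comp_measurePreserving (measurePreserving_fst (ν := expMeasure 1))
  have hX₂ := hX.comp_measurePreserving (measurePreserving_snd (μ := expMeasure 1))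
  exact (((memLp_const c).add (hX₁.const_mul u)).add (hX₂.const_mul v)).integrable_comp_of_isBigO
    hβ hf hfO

end GrowthIntegrability

section Independence

variable {Ω : Type*} [MeasurableSpace Ω] {μ : Measure Ω}

theorem ProbabilityTheory.iIndepFun.indepFun_sum_mul_prodMk {ι κ : Type*} [Fintype κ]
    {E : ι → Ω → ℝ} (h : iIndepFun E μ) (hE : ∀ i, Measurable (E i)) (e : κ → ι) (c : κ → ℝ)
    {i j : ι} (hi : ∀ k, e k ≠ i) (hj : ∀ k, e k ≠ j) :
    IndepFun (fun ω => ∑ k, c k * E (e k) ω) (fun ω => (E i ω, E j ω)) μ := by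
  classical
  have hdisj : Disjoint (Finset.univ.image e) {i, j} := by
    simp [Finset.disjoint_left, hi, hj]
  exact (h.indepFun_finset _ _ hdisj hE).comp
    (φ := fun g => ∑ k, c k * g ⟨e k, Finset.mem_image_of_mem e (Finset.mem_univ k)⟩)
    (ψ := fun g => (g ⟨i, by simp⟩, g ⟨j, by simp⟩)) (_mγ' := inferInstance)
    (by fun_prop) ((measurable_pi_apply _).prodMk (measurable_pi_apply _))

variable [IsFiniteMeasure μ] {α γ : Type*} [MeasurableSpace α] [MeasurableSpace γ]
  {Y : Ω → α} {Z : Ω → γ} {g : α × γ → ℝ}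

theorem ProbabilityTheory.IndepFun.integrable_map_prod_iff (h : IndepFun Y Z μ)
    (hY : AEMeasurable Y μ) (hZ : AEMeasurable Z μ)
    (hg : AEStronglyMeasurable g ((μ.map Y).prod (μ.map Z))) :
    Integrable g ((μ.map Y).prod (μ.map Z)) ↔ Integrable (fun ω => g (Y ω, Z ω)) μ := by
  rw [← (indepFun_iff_map_prod_eq_prod_map_map hY hZ).1 h] at hg ⊢
  exact integrable_map_measure hg (hY.prodMk hZ)

theorem ProbabilityTheory.IndepFun.integral_comp_eq_integral_integral (h : IndepFun Y Z μ)
    (hY : AEMeasurable Y μ) (hZ : AEMeasurable Z μ)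
    (hg : AEStronglyMeasurable g ((μ.map Y).prod (μ.map Z)))
    (hint : Integrable (fun ω => g (Y ω, Z ω)) μ) :
    ∫ ω, g (Y ω, Z ω) ∂μ = ∫ y, ∫ z, g (y, z) ∂(μ.map Z) ∂(μ.map Y) := by
  rw [← integral_prod _ ((h.integrable_map_prod_iff hY hZ hg).2 hint),
    ← (indepFun_iff_map_prod_eq_prod_map_map hY hZ).1 h]
  rw [← (indepFun_iff_map_prod_eq_prod_map_map hY hZ).1 h] at hg
  exact (integral_map (hY.prodMk hZ) hg).symm

end Independence

section DifferenceQuotient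

variable {Φ : ℝ → ℝ} {β : ℝ}

theorem mul_integral_deriv_comp_expMeasure_one_prod (hΦ : ContDiff ℝ 1 Φ) (hβ : 0 ≤ β)
    (hΦO : Φ =O[⊤] fun t => (1 + |t|) ^ β) (hΦ'O : deriv Φ =O[⊤] fun t => (1 + |t|) ^ β)
    (y u v : ℝ) :
    v * ∫ q : ℝ × ℝ, deriv Φ (y + u * q.1 + v * q.2) ∂((expMeasure 1).prod (expMeasure 1))
      = ∫ q : ℝ × ℝ, Φ (y + u * q.1 + v * q.2) ∂((expMeasure 1).prod (expMeasure 1))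
        - ∫ t, Φ (y + u * t) ∂(expMeasure 1) := by
  have hΦm := hΦ.continuous.measurable
  have hΦ'm := (hΦ.continuous_deriv le_rfl).measurable
  have hF := integrable_comp_add_mul_add_mul_expMeasure_one_prod hβ hΦm hΦO y u v
  have hF' := integrable_comp_add_mul_add_mul_expMeasure_one_prod hβ hΦ'm hΦ'O y u v
  calc v * ∫ q : ℝ × ℝ, deriv Φ (y + u * q.1 + v * q.2) ∂((expMeasure 1).prod (expMeasure 1))
      = ∫ a, v * ∫ b, deriv Φ (y + u * a + v * b) ∂(expMeasure 1) ∂(expMeasure 1) := by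
        rw [integral_prod _ hF', integral_const_mul]
    _ = ∫ a, ((∫ b, Φ (y + u * a + v * b) ∂(expMeasure 1)) - Φ (y + u * a)) ∂(expMeasure 1) :=
        integral_congr_ae <| ae_of_all _ fun a =>
          mul_integral_deriv_comp_expMeasure_one (hΦ.differentiable one_ne_zero) (y + u * a) v
            (integrable_comp_add_mul_expMeasure_one hβ hΦm hΦO _ _)
            (integrable_comp_add_mul_expMeasure_one hβ hΦ'm hΦ'O _ _)
    _ = _ := by
        rw [integral_sub hF.integral_prod_left
          (integrable_comp_add_mul_expMeasure_one hβ hΦm hΦO y u), integral_prod _ hF]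

theorem expMeasure_one_integral_sub_eq_mul_integral_deriv (hΦ : ContDiff ℝ 1 Φ) (hβ : 0 ≤ β)
    (hΦO : Φ =O[⊤] fun t => (1 + |t|) ^ β) (hΦ'O : deriv Φ =O[⊤] fun t => (1 + |t|) ^ β)
    (y u v : ℝ) :
    ∫ t, Φ (y + v * t) ∂(expMeasure 1) - ∫ t, Φ (y + u * t) ∂(expMeasure 1)
      = (v - u) * ∫ q : ℝ × ℝ, deriv Φ (y + u * q.1 + v * q.2)
          ∂((expMeasure 1).prod (expMeasure 1)) := by
  have hswap : ∀ g : ℝ → ℝ,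
      ∫ q : ℝ × ℝ, g (y + v * q.1 + u * q.2) ∂((expMeasure 1).prod (expMeasure 1))
        = ∫ q : ℝ × ℝ, g (y + u * q.1 + v * q.2) ∂((expMeasure 1).prod (expMeasure 1)) := by
    intro g
    rw [← integral_prod_swap]
    congr 1 with q
    simp only [Prod.fst_swap, Prod.snd_swap, add_right_comm]
  have hv := mul_integral_deriv_comp_expMeasure_one_prod hΦ hβ hΦO hΦ'O y u v
  have hu := mul_integral_deriv_comp_expMeasure_one_prod hΦ hβ hΦO hΦ'O y v u
  rw [hswap, hswap] at hu
  linear_combination hu - hv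

theorem integral_sub_eq_mul_integral_deriv_of_indepFun {Ω : Type*} [MeasurableSpace Ω]
    {μ : Measure Ω} [IsProbabilityMeasure μ] (hΦ : ContDiff ℝ 1 Φ) (hβ : 0 ≤ β)
    (hΦO : Φ =O[⊤] fun t => (1 + |t|) ^ β) (hΦ'O : deriv Φ =O[⊤] fun t => (1 + |t|) ^ β)
    {Y A B : Ω → ℝ} (hY : MemLp Y (ENNReal.ofReal β) μ) (hA : AEMeasurable A μ)
    (hB : AEMeasurable B μ) (hYAB : IndepFun Y (fun ω => (A ω, B ω)) μ) (hAB : IndepFun A B μ)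
    (hlawA : μ.map A = expMeasure 1) (hlawB : μ.map B = expMeasure 1) (u v : ℝ) :
    ∫ ω, Φ (Y ω + v * A ω) ∂μ - ∫ ω, Φ (Y ω + u * A ω) ∂μ
      = (v - u) * ∫ ω, deriv Φ (Y ω + u * A ω + v * B ω) ∂μ := by
  have hΦc := hΦ.continuous
  have hΦ'c := hΦ.continuous_deriv le_rfl
  have hYA : IndepFun Y A μ := hYAB.comp measurable_id measurable_fst
  have hlawAB : μ.map (fun ω => (A ω, B ω)) = (expMeasure 1).prod (expMeasure 1) := by
    rw [(indepFun_iff_map_prod_eq_prod_map_map hA hB).1 hAB, hlawA, hlawB]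
  have hAp := memLp_of_map_eq_expMeasure_one hA hlawA (ENNReal.ofReal_ne_top (r := β))
  have hBp := memLp_of_map_eq_expMeasure_one hB hlawB (ENNReal.ofReal_ne_top (r := β))
  have hΦA : ∀ w, Integrable (fun ω => Φ (Y ω + w * A ω)) μ := fun w =>
    (hY.add (hAp.const_mul w)).integrable_comp_of_isBigO hβ hΦc.measurable hΦO
  have hgA : ∀ w, AEStronglyMeasurable (fun p : ℝ × ℝ => Φ (p.1 + w * p.2))
      ((μ.map Y).prod (μ.map A)) := fun w =>
    (hΦc.comp (by fun_prop)).aestronglyMeasurable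
  have hΦA_eq : ∀ w, ∫ ω, Φ (Y ω + w * A ω) ∂μ
      = ∫ y, ∫ t, Φ (y + w * t) ∂(expMeasure 1) ∂(μ.map Y) := fun w => by
    rw [← hlawA]
    exact hYA.integral_comp_eq_integral_integral hY.aemeasurable hA (hgA w) (hΦA w)
  have hΦA_int : ∀ w, Integrable (fun y => ∫ t, Φ (y + w * t) ∂(expMeasure 1)) (μ.map Y) :=
    fun w => by
      rw [← hlawA]
      exact ((hYA.integrable_map_prod_iff hY.aemeasurable hA (hgA w)).2 (hΦA w)).integral_prod_left
  have hΦ'AB_eq : ∫ ω, deriv Φ (Y ω + u * A ω + v * B ω) ∂μ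
      = ∫ y, ∫ q : ℝ × ℝ, deriv Φ (y + u * q.1 + v * q.2)
          ∂((expMeasure 1).prod (expMeasure 1)) ∂(μ.map Y) := by
    rw [← hlawAB]
    exact hYAB.integral_comp_eq_integral_integral hY.aemeasurable (hA.prodMk hB)
      (g := fun p => deriv Φ (p.1 + u * p.2.1 + v * p.2.2))
      (hΦ'c.comp (by fun_prop)).aestronglyMeasurable
      (((hY.add (hAp.const_mul u)).add (hBp.const_mul v)).integrable_comp_of_isBigO hβ
        hΦ'c.measurable hΦ'O)
  rw [hΦA_eq, hΦA_eq, hΦ'AB_eq, ← integral_sub (hΦA_int v) (hΦA_int u), ← integral_const_mul]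
  exact integral_congr_ae <| ae_of_all _ fun y =>
    expMeasure_one_integral_sub_eq_mul_integral_deriv hΦ hβ hΦO hΦ'O y u v

end DifferenceQuotient

/-- **Difference-quotient identity for exponentials** (Lemma 2.2, first part):
for `Φ` a `C¹` function of moderate growth, i.i.d. standard exponentials
`𝓔₁, …, 𝓔ₙ, 𝓔, 𝓔'` and `S_x = ∑ x_j 𝓔_j`, for `u ≠ v` one has
`(E Φ(S_x + v𝓔) - E Φ(S_x + u𝓔))/(v - u) = E Φ'(S_x + u𝓔 + v𝓔')`. -/
theorem exp_difference_quotient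
    {Ω : Type*} [MeasurableSpace Ω] (μ : Measure Ω) [IsProbabilityMeasure μ]
    (Φ : ℝ → ℝ) (hΦ : ContDiff ℝ 1 Φ) (β : ℝ) (hβ : 0 < β)
    (hgrow : Φ =O[cocompact ℝ] fun t => |t| ^ β)
    (hgrow' : (deriv Φ) =O[cocompact ℝ] fun t => |t| ^ β)
    (n : ℕ) (x : Fin n → ℝ) (u v : ℝ) (huv : u ≠ v)
    (E : Fin (n + 2) → Ω → ℝ) (hmeas : ∀ j, Measurable (E j))
    (hindep : iIndepFun E μ)
    (hlaw : ∀ j, Measure.map (E j) μ = expMeasure 1) :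
    ((∫ ω, Φ ((∑ j : Fin n, x j * E ⟨j.1, by omega⟩ ω) + v * E ⟨n, by omega⟩ ω) ∂μ)
        - ∫ ω, Φ ((∑ j : Fin n, x j * E ⟨j.1, by omega⟩ ω) + u * E ⟨n, by omega⟩ ω) ∂μ)
          / (v - u)
      = ∫ ω, deriv Φ ((∑ j : Fin n, x j * E ⟨j.1, by omega⟩ ω)
          + u * E ⟨n, by omega⟩ ω + v * E ⟨n + 1, by omega⟩ ω) ∂μ := by
  have hΦO := hΦ.continuous.isBigO_top_one_add_abs_rpow hβ.le hgrow
  have hΦ'O := (hΦ.continuous_deriv le_rfl).isBigO_top_one_add_abs_rpow hβ.le hgrow'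
  have hY : MemLp (fun ω => ∑ j : Fin n, x j * E ⟨j.1, by omega⟩ ω) (ENNReal.ofReal β) μ :=
    memLp_finsetSum _ fun j _ => (memLp_of_map_eq_expMeasure_one (hmeas _).aemeasurable
      (hlaw _) ENNReal.ofReal_ne_top).const_mul (x j)
  have hYAB := hindep.indepFun_sum_mul_prodMk hmeas (fun j : Fin n => ⟨j.1, by omega⟩) x
    (i := ⟨n, by omega⟩) (j := ⟨n + 1, by omega⟩) (fun j => by simp [Fin.ext_iff]; omega)
    (fun j => by simp [Fin.ext_iff]; omega)
  have hAB := hindep.indepFun (i := ⟨n, by omega⟩) (j := ⟨n + 1, by omega⟩) (by simp)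
  rw [div_eq_iff (sub_ne_zero.2 huv.symm), mul_comm]
  exact integral_sub_eq_mul_integral_deriv_of_indepFun hΦ hβ.le hΦO hΦ'O hY
    (hmeas _).aemeasurable (hmeas _).aemeasurable hYAB hAB (hlaw _) (hlaw _) u v
end

section
/- Let k be a nonnegative integer, k < p < k+1, and n ≥ 1. Let 𝓔_1, ..., 𝓔_n be i.i.d. standard exponential random variables, and for x_1, ..., x_n ≥ 0 define M_p(x_1,...,x_n) = E[(Σ_{j=1}^n √(x_j)·𝓔_j)^p] and F_k(x_1,...,x_n) = E[Q_k(Σ_{j=1}^n √(x_j)·𝓔_j)]. Then M_p(x_1, ..., x_n) = C_p^{−1} · ∫_0^∞ F_k(t²x_1, ..., t²x_n)·t^{−p−1} dt. -/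
/-!
The substitution `t ↦ t / s` gives `∫₀^∞ Q_k(t s) t^{-p-1} dt = C_p s^p` for every `s ≥ 0`.
Taking `s = ∑ √(x_j) 𝓔_j`, so that `t s = ∑ √(t² x_j) 𝓔_j`, and exchanging `E` with `∫ dt` gives
the formula; Fubini applies because the same substitution for `|Q_k|` bounds the double integral
of the absolute value by a multiple of `E[s^p] < ∞`.

`Q_0 = 1 - e^{-t}`, `Q_{k+1}' = Q_k` and `Q_{k+1}(t) = t^{k+1}/(k+1)! - Q_k(t)`. Hence `Q_k > 0`
on `(0, ∞)`, and then `Q_k(t) ≤ min (t^{k+1}/(k+1)!) (t^k/k!)`, which makes `C_p` finite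
for `k < p < k + 1`.
-/

open MeasureTheory ProbabilityTheory Real Set

noncomputable def Q (k : ℕ) (t : ℝ) : ℝ :=
  (-1) ^ (k + 1) *
    (Real.exp (-t) - ∑ j ∈ Finset.range (k + 1), (-1) ^ j * t ^ j / (Nat.factorial j))

lemma Q_apply_zero (k : ℕ) : Q k 0 = 0 := by
  simp [Q, Finset.sum_range_succ']

lemma Q_zero_apply (t : ℝ) : Q 0 t = 1 - exp (-t) := by
  simp [Q]

lemma Q_succ_apply (k : ℕ) (t : ℝ) : Q (k + 1) t = t ^ (k + 1) / (k + 1).factorial - Q k t := by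
  have h : (-1 : ℝ) ^ (2 * k) = 1 := Even.neg_one_pow ⟨k, by ring⟩
  simp only [Q, Finset.sum_range_succ _ (k + 1)]
  linear_combination (t ^ (k + 1) / (k + 1).factorial) * h

lemma continuous_Q (k : ℕ) : Continuous (Q k) := by
  unfold Q
  fun_prop

lemma hasDerivAt_Q (k : ℕ) (t : ℝ) : HasDerivAt (Q (k + 1)) (Q k t) t := by
  induction k generalizing t with
  | zero =>
    have h : HasDerivAt (fun s => s - (1 - exp (-s))) (1 - (0 - exp (-t) * -1)) t :=
      (hasDerivAt_id t).sub ((hasDerivAt_const t 1).sub (hasDerivAt_neg t).exp)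
    simpa [funext (Q_succ_apply 0), Q_zero_apply, sub_eq_add_neg] using h
  | succ k ih =>
    have h := ((hasDerivAt_pow (k + 2) t).div_const ((k + 2).factorial : ℝ)).fun_sub (ih t)
    rw [funext (Q_succ_apply (k + 1)), Q_succ_apply k]
    refine h.congr_deriv ?_
    rw [Nat.factorial_succ (k + 1)]
    push_cast
    field_simp
    ring

lemma Q_pos (k : ℕ) {t : ℝ} (ht : 0 < t) : 0 < Q k t := by
  induction k generalizing t with
  | zero => simpa [Q_zero_apply] using ht
  | succ k ih =>
    have hmono : StrictMonoOn (Q (k + 1)) (Ici 0) :=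
      strictMonoOn_of_hasDerivWithinAt_pos (convex_Ici 0) (continuous_Q _).continuousOn
        (fun s _ => (hasDerivAt_Q k s).hasDerivWithinAt) (fun s hs => ih (by simpa using hs))
    simpa [Q_apply_zero] using hmono self_mem_Ici ht.le ht

lemma Q_nonneg (k : ℕ) {t : ℝ} (ht : 0 ≤ t) : 0 ≤ Q k t := by
  rcases ht.eq_or_lt with rfl | ht
  · exact (Q_apply_zero k).ge
  · exact (Q_pos k ht).le

lemma Q_le_pow_succ (k : ℕ) {t : ℝ} (ht : 0 ≤ t) : Q k t ≤ t ^ (k + 1) / (k + 1).factorial := by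
  linarith [Q_succ_apply k t, Q_nonneg (k + 1) ht]

lemma Q_le_pow (k : ℕ) {t : ℝ} (ht : 0 ≤ t) : Q k t ≤ t ^ k / k.factorial := by
  cases k with
  | zero => simp [Q_zero_apply, (exp_pos _).le]
  | succ k => linarith [Q_succ_apply k t, Q_nonneg k ht]

lemma integrableOn_Q_mul_rpow_of_le_pow {k m : ℕ} {p : ℝ} {s : Set ℝ} (hs : s ⊆ Ioi 0)
    (hs' : MeasurableSet s) (hQ : ∀ t, 0 ≤ t → Q k t ≤ t ^ m / m.factorial)
    (hint : IntegrableOn (fun t => t ^ (-p - 1 + m)) s) :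
    IntegrableOn (fun t => Q k t * t ^ (-p - 1)) s := by
  refine (hint.div_const m.factorial).mono'
    ((continuous_Q k).measurable.mul (measurable_id.pow_const _)).aestronglyMeasurable
    (ae_restrict_of_forall_mem hs' fun t ht => ?_)
  have ht : 0 < t := hs ht
  rw [Real.norm_of_nonneg (mul_nonneg (Q_nonneg k ht.le) (rpow_nonneg ht.le _)),
    rpow_add_natCast ht.ne', mul_div_assoc, mul_comm (Q k t)]
  gcongr
  exact hQ t ht.le

lemma integrableOn_Q_mul_rpow {k : ℕ} {p : ℝ} (hk : k < p) (hk' : p < k + 1) :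
    IntegrableOn (fun t => Q k t * t ^ (-p - 1)) (Ioi 0) := by
  rw [← Ioc_union_Ioi_eq_Ioi zero_le_one]
  refine IntegrableOn.union ?_ ?_
  · refine integrableOn_Q_mul_rpow_of_le_pow Ioc_subset_Ioi_self measurableSet_Ioc
      (fun t => Q_le_pow_succ k) ?_
    rw [← intervalIntegrable_iff_integrableOn_Ioc_of_le zero_le_one]
    exact intervalIntegral.intervalIntegrable_rpow' (by push_cast; linarith)
  · exact integrableOn_Q_mul_rpow_of_le_pow (Ioi_subset_Ioi zero_le_one) measurableSet_Ioi
      (fun t => Q_le_pow k) (integrableOn_Ioi_rpow_of_lt (by linarith) one_pos)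

lemma integral_Q_mul_rpow_pos {k : ℕ} {p : ℝ} (hk : k < p) (hk' : p < k + 1) :
    0 < ∫ t in Ioi 0, Q k t * t ^ (-p - 1) := by
  refine setIntegral_pos_iff_support_of_nonneg_ae ?_ (integrableOn_Q_mul_rpow hk hk') |>.mpr ?_
  · exact ae_restrict_of_forall_mem measurableSet_Ioi fun t (ht : 0 < t) =>
      mul_nonneg (Q_nonneg k ht.le) (rpow_nonneg ht.le _)
  · have : Ioi (0 : ℝ) ⊆ Function.support (fun t => Q k t * t ^ (-p - 1)) ∩ Ioi 0 :=
      fun t (ht : 0 < t) => ⟨(mul_pos (Q_pos k ht) (rpow_pos_of_pos ht _)).ne', ht⟩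
    exact (measure_mono this).trans_lt' (by simp)

section MellinMoment

variable {p : ℝ}

lemma comp_mul_mul_rpow_eq (g : ℝ → ℝ) {s t : ℝ} (hs : 0 < s) (ht : 0 < t) :
    g (t * s) * t ^ (-p - 1) = s ^ (p + 1) * (g (t * s) * (t * s) ^ (-p - 1)) := by
  have h : s ^ (p + 1) * s ^ (-p - 1) = 1 := by rw [← rpow_add hs]; simp
  rw [mul_rpow ht.le hs.le]
  linear_combination (-(g (t * s) * t ^ (-p - 1))) * h

lemma integrableOn_comp_mul_mul_rpow {g : ℝ → ℝ} (hg0 : g 0 = 0)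
    (hg : IntegrableOn (fun t => g t * t ^ (-p - 1)) (Ioi 0)) {s : ℝ} (hs : 0 ≤ s) :
    IntegrableOn (fun t => g (t * s) * t ^ (-p - 1)) (Ioi 0) := by
  rcases hs.eq_or_lt with rfl | hs
  · simp [hg0]
  have h := (integrableOn_Ioi_comp_mul_right_iff (fun u => g u * u ^ (-p - 1)) 0 hs).mpr
    (by rwa [zero_mul])
  exact IntegrableOn.congr_fun (h.const_mul (s ^ (p + 1)))
    (fun t ht => (comp_mul_mul_rpow_eq g hs ht).symm) measurableSet_Ioi

lemma integral_comp_mul_mul_rpow {g : ℝ → ℝ} (hg0 : g 0 = 0) (hp : p ≠ 0) {s : ℝ}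
    (hs : 0 ≤ s) :
    ∫ t in Ioi 0, g (t * s) * t ^ (-p - 1) = s ^ p * ∫ t in Ioi 0, g t * t ^ (-p - 1) := by
  rcases hs.eq_or_lt with rfl | hs
  · simp [hg0, zero_rpow hp]
  rw [setIntegral_congr_fun measurableSet_Ioi (fun t ht => comp_mul_mul_rpow_eq g hs ht),
    integral_const_mul, integral_comp_mul_right_Ioi (fun u => g u * u ^ (-p - 1)) 0 hs,
    zero_mul, smul_eq_mul, ← mul_assoc, ← rpow_neg_one, ← rpow_add hs]
  ring_nf

theorem integral_integral_comp_mul_mul_rpow {Ω : Type*} [MeasurableSpace Ω] {μ : Measure Ω}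
    [SFinite μ] {f : ℝ → ℝ} (hf : Measurable f) (hf0 : f 0 = 0)
    (hfi : IntegrableOn (fun t => f t * t ^ (-p - 1)) (Ioi 0)) (hp : p ≠ 0) {S : Ω → ℝ}
    (hS : Measurable S) (hS0 : 0 ≤ᵐ[μ] S) (hSp : Integrable (fun ω => S ω ^ p) μ) :
    ∫ t in Ioi 0, (∫ ω, f (t * S ω) ∂μ) * t ^ (-p - 1)
      = (∫ t in Ioi 0, f t * t ^ (-p - 1)) * ∫ ω, S ω ^ p ∂μ := by
  set F : Ω × ℝ → ℝ := fun z => f (z.2 * S z.1) * z.2 ^ (-p - 1)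
  have hnorm : ∀ ω, ∫ t in Ioi 0, ‖F (ω, t)‖ = ∫ t in Ioi 0, |f (t * S ω)| * t ^ (-p - 1) :=
    fun ω => setIntegral_congr_fun measurableSet_Ioi fun t (ht : 0 < t) => by
      simp [F, abs_of_pos (rpow_pos_of_pos ht _)]
  have hF : Integrable F (μ.prod (volume.restrict (Ioi 0))) := by
    refine (integrable_prod_iff ?_).mpr ⟨?_, ?_⟩
    · exact ((hf.comp (measurable_snd.mul (hS.comp measurable_fst))).mul
        (measurable_snd.pow_const _)).aestronglyMeasurable
    · filter_upwards [hS0] with ω hω using integrableOn_comp_mul_mul_rpow hf0 hfi hω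
    · refine (hSp.mul_const (∫ t in Ioi 0, |f t| * t ^ (-p - 1))).congr ?_
      filter_upwards [hS0] with ω hω
      rw [hnorm, integral_comp_mul_mul_rpow (g := fun u => |f u|) (by simp [hf0]) hp hω]
  calc ∫ t in Ioi 0, (∫ ω, f (t * S ω) ∂μ) * t ^ (-p - 1)
      = ∫ t in Ioi 0, ∫ ω, F (ω, t) ∂μ := by simp only [F, integral_mul_const]
    _ = ∫ ω, (∫ t in Ioi 0, F (ω, t)) ∂μ := (integral_integral_swap hF).symm
    _ = ∫ ω, (∫ t in Ioi 0, f t * t ^ (-p - 1)) * S ω ^ p ∂μ := by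
      refine integral_congr_ae ?_
      filter_upwards [hS0] with ω hω
      rw [integral_comp_mul_mul_rpow hf0 hp hω, mul_comm]
    _ = _ := integral_const_mul _ _

end MellinMoment

section Gamma

variable {a r : ℝ}

lemma ae_nonneg_gammaMeasure : ∀ᵐ u ∂gammaMeasure a r, 0 ≤ u := by
  simp only [ae_iff, not_le, gammaMeasure]
  exact (withDensity_apply _ measurableSet_Iio).trans (lintegral_gammaPDF_of_nonpos le_rfl)

lemma integrable_norm_rpow_gammaMeasure (ha : 0 < a) (hr : 0 < r) {q : ℝ} (hq : 0 ≤ q) :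
    Integrable (fun u : ℝ => ‖u‖ ^ q) (gammaMeasure a r) := by
  rw [gammaMeasure, integrable_withDensity_iff (f := gammaPDF a r)
    (measurable_gammaPDFReal a r).ennreal_ofReal
    (ae_of_all _ fun _ => ENNReal.ofReal_lt_top), ← integrableOn_univ, ← Iio_union_Ici (a := 0),
    integrableOn_union, integrableOn_Ici_iff_integrableOn_Ioi]
  constructor
  · exact integrableOn_zero.congr_fun (fun u (hu : u < 0) => by simp [gammaPDF_of_neg hu])
      measurableSet_Iio
  · refine IntegrableOn.congr_fun ((integrableOn_rpow_mul_exp_neg_mul_rpow (s := q + a - 1)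
      (by linarith) one_pos hr).const_mul (r ^ a / Gamma a)) (fun u (hu : 0 < u) => ?_)
      measurableSet_Ioi
    rw [gammaPDF_of_nonneg hu.le, ENNReal.toReal_ofReal (by positivity), norm_of_nonneg hu.le,
      rpow_one, add_sub_assoc, rpow_add hu, neg_mul]
    ring

lemma memLp_of_map_eq_gammaMeasure {Ω : Type*} [MeasurableSpace Ω] {μ : Measure Ω}
    {X : Ω → ℝ} (hX : AEMeasurable X μ) (hlaw : μ.map X = gammaMeasure a r) (ha : 0 < a)
    (hr : 0 < r) {q : ℝ} (hq : 0 < q) : MemLp X (ENNReal.ofReal q) μ := by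
  have hq0 : ENNReal.ofReal q ≠ 0 := by simpa using hq
  have h : MemLp id (ENNReal.ofReal q) (gammaMeasure a r) := by
    rw [← memLp_norm_rpow_iff aestronglyMeasurable_id hq0 ENNReal.ofReal_ne_top,
      ENNReal.toReal_ofReal hq.le, ENNReal.div_self hq0 ENNReal.ofReal_ne_top,
      memLp_one_iff_integrable]
    exact integrable_norm_rpow_gammaMeasure ha hr hq.le
  rw [← hlaw] at h
  exact (memLp_map_measure_iff aestronglyMeasurable_id hX).mp h

end Gamma

theorem Mp_integral_representation_general
    {Ω : Type*} [MeasurableSpace Ω] (μ : Measure Ω) [IsProbabilityMeasure μ]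
    (k : ℕ) (p : ℝ) (hk : (k : ℝ) < p) (hk' : p < k + 1) (n : ℕ)
    (E : Fin n → Ω → ℝ) (hmeas : ∀ j, Measurable (E j))
    (hlaw : ∀ j, Measure.map (E j) μ = expMeasure 1)
    (x : Fin n → ℝ) :
    (∫ ω, (∑ j, Real.sqrt (x j) * E j ω) ^ p ∂μ)
      = (∫ t in Set.Ioi (0 : ℝ), Q k t * t ^ (-p - 1))⁻¹
        * ∫ t in Set.Ioi (0 : ℝ),
            (∫ ω, Q k (∑ j, Real.sqrt (t ^ 2 * x j) * E j ω) ∂μ) * t ^ (-p - 1) := by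
  have hp : 0 < p := (Nat.cast_nonneg k).trans_lt hk
  set S : Ω → ℝ := fun ω => ∑ j, √(x j) * E j ω
  have hS : Measurable S := Finset.measurable_sum _ fun j _ => (hmeas j).const_mul _
  have hS0 : 0 ≤ᵐ[μ] S := by
    have hE0 : ∀ j, ∀ᵐ ω ∂μ, 0 ≤ E j ω := fun j =>
      ae_of_ae_map (hmeas j).aemeasurable (by rw [hlaw j]; exact ae_nonneg_gammaMeasure)
    filter_upwards [ae_all_iff.mpr hE0] with ω hω
    exact Finset.sum_nonneg fun j _ => mul_nonneg (sqrt_nonneg _) (hω j)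
  have hSp : Integrable (fun ω => S ω ^ p) μ := by
    have hSL : MemLp S (ENNReal.ofReal p) μ := memLp_finsetSum _ fun j _ =>
      (memLp_of_map_eq_gammaMeasure (hmeas j).aemeasurable (hlaw j) one_pos one_pos hp).const_mul _
    refine (hSL.integrable_norm_rpow (by simpa using hp) ENNReal.ofReal_ne_top).congr ?_
    filter_upwards [hS0] with ω hω
    rw [ENNReal.toReal_ofReal hp.le, norm_of_nonneg hω]
  have hscale : ∀ t ∈ Ioi (0 : ℝ), (∫ ω, Q k (∑ j, √(t ^ 2 * x j) * E j ω) ∂μ) * t ^ (-p - 1)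
      = (∫ ω, Q k (t * S ω) ∂μ) * t ^ (-p - 1) := fun t (ht : 0 < t) => by
    simp only [S, Finset.mul_sum, sqrt_mul (sq_nonneg t), sqrt_sq ht.le, mul_assoc]
  rw [setIntegral_congr_fun measurableSet_Ioi hscale, integral_integral_comp_mul_mul_rpow
    (continuous_Q k).measurable (Q_apply_zero k) (integrableOn_Q_mul_rpow hk hk') hp.ne' hS hS0
    hSp, inv_mul_cancel_left₀ (integral_Q_mul_rpow_pos hk hk').ne']

/-- **Integral representation of `M_p`** (Lemma 3.2): for `k < p < k+1`,
`M_p(x₁,…,xₙ) = C_p⁻¹ ∫₀^∞ F_k(t²x₁, …, t²xₙ) t^{-p-1} dt`, where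
`M_p(x) = E[(∑ √(x_j) 𝓔_j)^p]`, `F_k(x) = E[Q_k(∑ √(x_j) 𝓔_j)]` and
`C_p = ∫₀^∞ Q_k(t) t^{-p-1} dt`. -/
theorem Mp_integral_representation
    {Ω : Type*} [MeasurableSpace Ω] (μ : Measure Ω) [IsProbabilityMeasure μ]
    (k : ℕ) (p : ℝ) (hk : (k : ℝ) < p) (hk' : p < k + 1) (n : ℕ) (hn : 1 ≤ n)
    (E : Fin n → Ω → ℝ) (hmeas : ∀ j, Measurable (E j))
    (hindep : iIndepFun E μ)
    (hlaw : ∀ j, Measure.map (E j) μ = expMeasure 1)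
    (x : Fin n → ℝ) (hx : ∀ j, 0 ≤ x j) :
    (∫ ω, (∑ j, Real.sqrt (x j) * E j ω) ^ p ∂μ)
      = (∫ t in Set.Ioi (0 : ℝ), Q k t * t ^ (-p - 1))⁻¹
        * ∫ t in Set.Ioi (0 : ℝ),
            (∫ ω, Q k (∑ j, Real.sqrt (t ^ 2 * x j) * E j ω) ∂μ) * t ^ (-p - 1) :=
  Mp_integral_representation_general μ k p hk hk' n E hmeas hlaw x
end
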